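/- Let B be the incidence matrix of a symmetric 2-(v,k,λ) design and let a be a complex number of absolute value 1 such that the matrix obtained from B by replacing every 0 entry with a is a complex Hadamard matrix of order v. Then Re(a) = 1 − v(v−1)/(2k(v−k)). -/

import Mathlib

open Matrix

/-- `H` is a complex Hadamard matrix: unimodular entries and `H Hᴴ = n • I`. -/
def IsCHadamard {n : Type*} [Fintype n] [DecidableEq n] (H : Matrix n n ℂ) : Prop :=
  (∀ i j, ‖H i j‖ = 1) ∧
    H * H.conjTranspose = (Fintype.card n : ℂ) • 1

/-- `B` is the incidence matrix (over `ℂ`, with `0`/`1` entries) of a symmetric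
`2-(v,k,λ)` design. -/
def IsIncidence (v k lam : ℕ) (B : Matrix (Fin v) (Fin v) ℂ) : Prop :=
  (∀ i j, B i j = 0 ∨ B i j = 1) ∧
    (∀ i, ∑ j, B i j = (k : ℂ)) ∧ (∀ j, ∑ i, B i j = (k : ℂ)) ∧
    B * B.transpose = ((k : ℂ) - (lam : ℂ)) • 1 + (lam : ℂ) • Matrix.of (fun _ _ => (1 : ℂ))

/-!
Let `H` be `B` with its zeros replaced by `a`. The inner product of two distinct rows of `H`
splits according to the `λ` common ones, the `2(k - λ)` positions with exactly one `1`, and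
the remaining `v - 2k + λ` common zeros, so orthogonality of the rows reads
`2 (1 - Re a) (k - λ) = v`. Together with the design identity `λ (v - 1) = k (k - 1)`,
i.e. `(k - λ)(v - 1) = k (v - k)`, this is the claimed value of `Re a`.
-/

open ComplexConjugate

lemma mul_conj_ite_eq_zero {a r s : ℂ} (ha : ‖a‖ = 1) (hr : r = 0 ∨ r = 1) (hs : s = 0 ∨ s = 1) :
    (if r = 0 then a else r) * conj (if s = 0 then a else s) =
      1 + (conj a - 1) * r + (a - 1) * s + (2 - a - conj a) * (r * s) := by
  rcases hr with rfl | rfl <;> rcases hs with rfl | rfl <;>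
    simp [Complex.mul_conj', ha]
  ring

lemma sum_mul_conj_ite_eq_zero {ι : Type*} [Fintype ι] {a : ℂ} (ha : ‖a‖ = 1) {r s : ι → ℂ}
    (hr : ∀ x, r x = 0 ∨ r x = 1) (hs : ∀ x, s x = 0 ∨ s x = 1) :
    ∑ x, (if r x = 0 then a else r x) * conj (if s x = 0 then a else s x) =
      Fintype.card ι + (conj a - 1) * ∑ x, r x + (a - 1) * ∑ x, s x
        + (2 - a - conj a) * ∑ x, r x * s x := by
  simp only [mul_conj_ite_eq_zero ha (hr _) (hs _), Finset.sum_add_distrib, ← Finset.mul_sum,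
    Finset.sum_const, Finset.card_univ, nsmul_eq_mul, mul_one]

namespace IsIncidence

variable {v k lam : ℕ} {B : Matrix (Fin v) (Fin v) ℂ}

lemma lam_mul_sub_one (hB : IsIncidence v k lam B) (hv : 0 < v) :
    (lam : ℝ) * (v - 1) = k * (k - 1) := by
  obtain ⟨-, hrow, hcol, hBBt⟩ := hB
  let i : Fin v := ⟨0, hv⟩
  have hcount : ∑ j, (B * Bᵀ) i j = (k : ℂ) * k := by
    simp only [mul_apply, transpose_apply]
    rw [Finset.sum_comm]
    simp_rw [← Finset.mul_sum, hcol, ← Finset.sum_mul, hrow]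
  rw [hBBt] at hcount
  simp only [smul_of, Matrix.add_apply, Matrix.smul_apply, one_apply, smul_eq_mul, mul_ite,
    mul_one, mul_zero, of_apply, Pi.smul_apply, Finset.sum_add_distrib, Finset.sum_ite_eq, Finset.mem_univ,
    ↓reduceIte, Finset.sum_const, Finset.card_univ, Fintype.card_fin, nsmul_eq_mul] at hcount
  have h : ((lam * (v - 1) : ℝ) : ℂ) = ((k * (k - 1) : ℝ) : ℂ) := by
    push_cast
    linear_combination hcount
  exact_mod_cast h

lemma two_mul_one_sub_re_mul (hB : IsIncidence v k lam B) (hv : 1 < v) {a : ℂ} (ha : ‖a‖ = 1)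
    (hH : IsCHadamard (Matrix.of fun i j => if B i j = 0 then a else B i j)) :
    2 * (1 - a.re) * (k - lam) = (v : ℝ) := by
  obtain ⟨hent, hrow, -, hBBt⟩ := hB
  let i : Fin v := ⟨0, by omega⟩
  let j : Fin v := ⟨1, hv⟩
  have hij : i ≠ j := by simp [i, j, Fin.ext_iff]
  have horth := congrFun (congrFun hH.2 i) j
  have hcommon := congrFun (congrFun hBBt i) j
  simp only [mul_apply, conjTranspose_apply, of_apply, RCLike.star_def, transpose_apply,
    Matrix.smul_apply, one_apply_ne hij, Matrix.add_apply] at horth hcommon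
  rw [sum_mul_conj_ite_eq_zero ha (hent i) (hent j), hrow, hrow] at horth
  simp only [smul_eq_mul, mul_zero, mul_one, Fintype.card_fin] at horth hcommon
  rw [hcommon] at horth
  apply_fun Complex.re at horth
  simp only [zero_add, Complex.add_re, Complex.natCast_re, Complex.mul_re, Complex.sub_re,
    Complex.conj_re, Complex.one_re, Complex.sub_im, Complex.conj_im, Complex.one_im, sub_zero,
    Complex.natCast_im, mul_zero, Complex.re_ofNat, Complex.im_ofNat, zero_sub, sub_self,
    Complex.zero_re] at horth
  linear_combination -horth

end IsIncidence

theorem stmt1 (v k lam : ℕ) (hlk : lam < k) (hkv : k < v)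
    (B : Matrix (Fin v) (Fin v) ℂ) (hB : IsIncidence v k lam B)
    (a : ℂ) (ha : ‖a‖ = 1)
    (hH : IsCHadamard (Matrix.of fun i j => if B i j = 0 then a else B i j)) :
    a.re = 1 - ((v : ℝ) * ((v : ℝ) - 1)) / (2 * (k : ℝ) * ((v : ℝ) - (k : ℝ))) := by
  have hv : 1 < v := by omega
  have hdesign := hB.lam_mul_sub_one (by omega)
  have horth := hB.two_mul_one_sub_re_mul hv ha hH
  have hkl : (k : ℝ) - lam ≠ 0 := sub_ne_zero.mpr (by exact_mod_cast hlk.ne')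
  have hv1 : (v : ℝ) - 1 ≠ 0 := by
    have : (1 : ℝ) < v := by exact_mod_cast hv
    linarith
  have hkvk : 2 * (k : ℝ) * (v - k) = 2 * (k - lam) * (v - 1) := by linear_combination 2 * hdesign
  rw [hkvk, eq_sub_iff_add_eq, mul_div_mul_right _ _ hv1, ← horth]
  field_simp
  ring
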